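/- arXiv:1410.3271 — 5 statements merged into one kernel-verified Lean document; each statement's English description precedes it below -/
import Mathlib

section
/- Let Q = (V, E, s, t) be a finite quiver and let ∂ : ℝ^E → ℝ^V be the boundary map defined by ∂(∑_h A_h · h) = ∑_h A_h · (s(h) - t(h)). Then there exists an element A ∈ ℝ^E with all coordinates strictly positive and ∂(A) = 0 if and only if every edge of E is contained in some directed cycle of Q. -/
open scoped BigOperators

/-- The boundary map `∂ : ℝ^E → ℝ^V` of a finite quiver, sending a generator `h`
to `s h - t h`. -/
noncomputable def bdry {V E : Type*} [Fintype E] [DecidableEq V] (s t : E → V) :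
    (E → ℝ) →ₗ[ℝ] (V → ℝ) :=
  ∑ h : E, (LinearMap.proj h : (E → ℝ) →ₗ[ℝ] ℝ).smulRight
    (fun v => (if s h = v then (1 : ℝ) else 0) - (if t h = v then (1 : ℝ) else 0))

/-- `E` is covered by cycles: every edge lies on some directed cycle. -/
def CoveredByCycles {V E : Type*} (s t : E → V) : Prop :=
  ∀ h : E, ∃ (l : ℕ) (c : Fin (l + 1) → E),
    (∀ i : Fin (l + 1), t (c i) = s (c (i + 1))) ∧ ∃ i, c i = h

/-!
If `A > 0` and `∂A = 0`, let `S` be the set of vertices reachable from `t h`. No edge leaves `S`,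
so `∑_{v ∈ S} (∂A)_v` is minus the total weight of the edges entering `S`; as it vanishes, no edge
enters `S` either. In particular `s h ∈ S`, and a path from `t h` to `s h` closes up with `h` to a
cycle. Conversely, the sum of the indicator vectors of cycles through each edge is a positive
element of `ker ∂`, since each cycle enters every vertex as often as it leaves it.
-/

section Boundary

variable {V E : Type*} [Fintype E] [DecidableEq V] (s t : E → V)

lemma bdry_apply (A : E → ℝ) (v : V) :
    bdry s t A v =
      ∑ e, A e * ((if s e = v then (1 : ℝ) else 0) - (if t e = v then 1 else 0)) := by
  simp [bdry, LinearMap.sum_apply, Finset.sum_apply, smul_eq_mul]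

lemma bdry_single [DecidableEq E] (e : E) :
    bdry s t (Pi.single e 1) = Pi.single (s e) 1 - Pi.single (t e) 1 := by
  ext v
  rw [bdry_apply, Finset.sum_eq_single e (fun e' _ he' => by simp [he'])
    (fun h => absurd (Finset.mem_univ e) h)]
  simp [Pi.single_apply, eq_comm]

lemma sum_bdry_apply (A : E → ℝ) (S : Finset V) :
    ∑ v ∈ S, bdry s t A v =
      ∑ e, A e * ((if s e ∈ S then (1 : ℝ) else 0) - (if t e ∈ S then 1 else 0)) := by
  simp only [bdry_apply]
  rw [Finset.sum_comm]
  refine Finset.sum_congr rfl fun e _ => ?_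
  rw [← Finset.mul_sum, Finset.sum_sub_distrib, Finset.sum_ite_eq, Finset.sum_ite_eq]

lemma src_mem_of_tgt_mem {A : E → ℝ} (hA : ∀ e, 0 ≤ A e) (hbdry : bdry s t A = 0)
    {S : Finset V} (hS : ∀ e, s e ∈ S → t e ∈ S) {e : E} (he : 0 < A e) (ht : t e ∈ S) :
    s e ∈ S := by
  have hterm_nonpos : ∀ e' ∈ Finset.univ,
      A e' * ((if s e' ∈ S then (1 : ℝ) else 0) - (if t e' ∈ S then 1 else 0)) ≤ 0 := by
    intro e' _
    by_cases hs : s e' ∈ S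
    · simp [hs, hS e' hs]
    · refine mul_nonpos_of_nonneg_of_nonpos (hA e') ?_
      split_ifs <;> norm_num
  have hsum : ∑ e', A e' * ((if s e' ∈ S then (1 : ℝ) else 0) - (if t e' ∈ S then 1 else 0))
      = 0 := by
    rw [← sum_bdry_apply, hbdry]
    simp
  have hterm := (Finset.sum_eq_zero_iff_of_nonpos hterm_nonpos).mp hsum e (Finset.mem_univ e)
  by_contra hs
  simp only [hs, ht, if_false, if_true] at hterm
  linarith

end Boundary

section Cycles

variable {V E : Type*} (s t : E → V)

def EdgeRel (x y : V) : Prop := ∃ e, s e = x ∧ t e = y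

lemma exists_walk_of_reflTransGen {x : V} {h : E}
    (hx : Relation.ReflTransGen (EdgeRel s t) x (s h)) :
    ∃ (l : ℕ) (c : Fin (l + 1) → E), s (c 0) = x ∧
      (∀ i : Fin l, t (c i.castSucc) = s (c i.succ)) ∧ c (Fin.last l) = h := by
  induction hx using Relation.ReflTransGen.head_induction_on with
  | refl => exact ⟨0, fun _ => h, rfl, Fin.elim0, rfl⟩
  | head hxy _ ih =>
    obtain ⟨e, rfl, rfl⟩ := hxy
    obtain ⟨l, c, hc0, hchain, hlast⟩ := ih
    refine ⟨l + 1, Fin.cons e c, rfl, fun i => ?_, by simpa [← Fin.succ_last] using hlast⟩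
    cases i using Fin.cases with
    | zero => simpa using hc0.symm
    | succ j => simpa [← Fin.succ_castSucc] using hchain j

lemma cyclic_of_walk {l : ℕ} {c : Fin (l + 1) → E}
    (hchain : ∀ i : Fin l, t (c i.castSucc) = s (c i.succ))
    (hclose : t (c (Fin.last l)) = s (c 0)) :
    ∀ i : Fin (l + 1), t (c i) = s (c (i + 1)) := by
  intro i
  cases i using Fin.lastCases with
  | last => rwa [Fin.last_add_one]
  | cast j => rw [Fin.coeSucc_eq_succ]; exact hchain j

lemma coveredByCycles_of_reachable
    (hreach : ∀ h, Relation.ReflTransGen (EdgeRel s t) (t h) (s h)) :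
    CoveredByCycles s t := by
  intro h
  obtain ⟨l, c, hc0, hchain, hlast⟩ := exists_walk_of_reflTransGen s t (hreach h)
  exact ⟨l, c, cyclic_of_walk s t hchain (by rw [hlast, hc0]), Fin.last l, hlast⟩

end Cycles

section Main

variable {V E : Type*} [Fintype E] [DecidableEq V] (s t : E → V)

lemma reachable_of_pos_bdry_eq_zero [Fintype V] {A : E → ℝ} (hA : ∀ e, 0 < A e)
    (hbdry : bdry s t A = 0) (h : E) :
    Relation.ReflTransGen (EdgeRel s t) (t h) (s h) := by
  classical
  let S : Finset V := {v | Relation.ReflTransGen (EdgeRel s t) (t h) v}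
  have hmem : ∀ v, v ∈ S ↔ Relation.ReflTransGen (EdgeRel s t) (t h) v := by simp [S]
  have hclosed : ∀ e, s e ∈ S → t e ∈ S := fun e he =>
    (hmem _).2 (((hmem _).1 he).tail ⟨e, rfl, rfl⟩)
  exact (hmem _).1 <| src_mem_of_tgt_mem s t (fun e => (hA e).le) hbdry hclosed (hA h)
    ((hmem _).2 .refl)

lemma bdry_sum_single_cycle [DecidableEq E] {l : ℕ} {c : Fin (l + 1) → E}
    (hc : ∀ i, t (c i) = s (c (i + 1))) :
    bdry s t (∑ i, Pi.single (c i) 1) = 0 := by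
  simp only [map_sum, bdry_single, Finset.sum_sub_distrib, hc, sub_eq_zero]
  exact (Equiv.sum_comp (Equiv.addRight 1) fun i => (Pi.single (s (c i)) 1 : V → ℝ)).symm

lemma exists_pos_bdry_eq_zero_of_coveredByCycles (hcov : CoveredByCycles s t) :
    ∃ A : E → ℝ, (∀ h, 0 < A h) ∧ bdry s t A = 0 := by
  classical
  choose l c hc hmem using hcov
  refine ⟨∑ h, ∑ i, Pi.single (c h i) 1, fun e => ?_, ?_⟩
  · obtain ⟨i, hi⟩ := hmem e
    simp only [Finset.sum_apply]
    refine Finset.sum_pos' (fun _ _ => Finset.sum_nonneg fun _ _ => ?_) ⟨e, by simp, ?_⟩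
    · simp only [Pi.single_apply]; positivity
    refine Finset.sum_pos' (fun _ _ => ?_) ⟨i, by simp, by simp [hi]⟩
    simp only [Pi.single_apply]; positivity
  · simp only [map_sum, bdry_sum_single_cycle s t (hc _), Finset.sum_const_zero]

end Main

theorem stmt0 {V E : Type*} [Fintype V] [Fintype E] [DecidableEq V] (s t : E → V) :
    (∃ A : E → ℝ, (∀ h, 0 < A h) ∧ bdry s t A = 0) ↔ CoveredByCycles s t :=
  ⟨fun ⟨_, hA, hbdry⟩ =>
    coveredByCycles_of_reachable s t (reachable_of_pos_bdry_eq_zero s t hA hbdry),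
   exists_pos_bdry_eq_zero_of_coveredByCycles s t⟩
end

section
/- Let P ∈ SU(m), and let Q ∈ O(m) diagonalize ᵗP P, i.e. ᵗQ ᵗP P Q = diag(e^{iθ_1}, ..., e^{iθ_m}). Then R := P Q diag(e^{-iθ_1/2}, ..., e^{-iθ_m/2}) satisfies ᵗR = R* = R^{-1}, hence R ∈ O(m). -/
open Matrix Complex

private lemma mapRmul {m : ℕ} (A B : Matrix (Fin m) (Fin m) ℝ) :
    (A * B).map Complex.ofReal = A.map Complex.ofReal * B.map Complex.ofReal := by
  ext i j
  simp [Matrix.map_apply, Matrix.mul_apply]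

private lemma mapRone {m : ℕ} :
    (1 : Matrix (Fin m) (Fin m) ℝ).map Complex.ofReal = 1 := by
  ext i j
  rcases eq_or_ne i j with rfl | h
  · simp
  · simp [Matrix.one_apply_ne h, h]

private lemma mapRinj {m : ℕ} {A B : Matrix (Fin m) (Fin m) ℝ}
    (h : A.map Complex.ofReal = B.map Complex.ofReal) : A = B := by
  ext i j
  have := congrFun (congrFun h i) j
  simpa [Matrix.map_apply] using this

theorem stmt5 (m : ℕ) (P : Matrix (Fin m) (Fin m) ℂ) (Q : Matrix (Fin m) (Fin m) ℝ)
    (θ : Fin m → ℝ)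
    (hP : P ∈ Matrix.specialUnitaryGroup (Fin m) ℂ)
    (hQ : Q ∈ Matrix.orthogonalGroup (Fin m) ℝ)
    (hdiag : (Q.map (Complex.ofReal))ᵀ * (Pᵀ * P) * Q.map (Complex.ofReal)
      = Matrix.diagonal fun i => Complex.exp (Complex.I * θ i)) :
    let R := P * Q.map (Complex.ofReal) *
      Matrix.diagonal fun i => Complex.exp (-(Complex.I * θ i) / 2)
    Rᵀ = R.conjTranspose ∧ R * R.conjTranspose = 1 ∧
      ∃ R₀ : Matrix (Fin m) (Fin m) ℝ, R₀ ∈ Matrix.orthogonalGroup (Fin m) ℝ ∧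
        R = R₀.map Complex.ofReal := by
  intro R
  set Qc : Matrix (Fin m) (Fin m) ℂ := Q.map Complex.ofReal with hQc
  set E : Matrix (Fin m) (Fin m) ℂ :=
    Matrix.diagonal fun i => Complex.exp (-(Complex.I * θ i) / 2) with hE
  set D : Matrix (Fin m) (Fin m) ℂ :=
    Matrix.diagonal fun i => Complex.exp (Complex.I * θ i) with hD
  have hPP : P * Pᴴ = 1 := hP.1.2
  have hQQ : Q * Qᵀ = 1 := hQ.2
  have hQcQc : Qc * Qcᵀ = 1 := by
    have h := congrArg (fun M => Matrix.map M Complex.ofReal) hQQ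
    simp only [mapRmul, mapRone] at h
    rw [hQc, ← Matrix.transpose_map]
    exact h
  have hQcH : Qcᴴ = Qcᵀ := by
    ext i j; simp [hQc, conjTranspose_apply]
  have hEH : Eᴴ = Matrix.diagonal fun i => Complex.exp ((Complex.I * θ i) / 2) := by
    ext i j
    rcases eq_or_ne i j with rfl | h
    · simp only [conjTranspose_apply, hE, Matrix.diagonal_apply_eq]
      rw [Complex.star_def, ← Complex.exp_conj]
      congr 1
      simp only [map_div₀, map_neg, _root_.map_mul, Complex.conj_I, Complex.conj_ofReal,
        Complex.conj_ofNat]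
      ring
    · simp [conjTranspose_apply, hE, Matrix.diagonal_apply_ne _ h,
        Matrix.diagonal_apply_ne _ h.symm]
  have hEEH : E * Eᴴ = 1 := by
    rw [hEH, hE, Matrix.diagonal_mul_diagonal]
    have hf : (fun i => Complex.exp (-(Complex.I * θ i) / 2) *
        Complex.exp ((Complex.I * θ i) / 2)) = fun _ => (1 : ℂ) := by
      funext i
      rw [← Complex.exp_add, neg_div, neg_add_cancel, Complex.exp_zero]
    rw [hf, Matrix.diagonal_one]
  have hET : Eᵀ = E := by rw [hE, Matrix.diagonal_transpose]
  have hED : E * D = Eᴴ := by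
    rw [hEH, hE, hD, Matrix.diagonal_mul_diagonal]
    have hf : (fun i => Complex.exp (-(Complex.I * θ i) / 2) *
        Complex.exp (Complex.I * θ i)) = fun i => Complex.exp ((Complex.I * θ i) / 2) := by
      funext i
      rw [← Complex.exp_add]
      congr 1
      ring
    rw [hf]
  have hstar : Qcᵀ * Pᵀ = D * (Qcᵀ * Pᴴ) := by
    calc Qcᵀ * Pᵀ = Qcᵀ * Pᵀ * (P * Pᴴ) := by rw [hPP, Matrix.mul_one]
      _ = Qcᵀ * (Pᵀ * P) * Qc * (Qcᵀ * Pᴴ) := by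
          simp only [Matrix.mul_assoc]
          rw [← Matrix.mul_assoc Qc Qcᵀ Pᴴ, hQcQc, Matrix.one_mul]
      _ = D * (Qcᵀ * Pᴴ) := by rw [hdiag]
  have h1 : Rᵀ = Rᴴ := by
    show (P * Qc * E)ᵀ = (P * Qc * E)ᴴ
    rw [Matrix.transpose_mul, Matrix.transpose_mul, Matrix.conjTranspose_mul,
      Matrix.conjTranspose_mul, hET, hQcH]
    rw [hstar, ← Matrix.mul_assoc E D _, hED]
  have h2 : R * Rᴴ = 1 := by
    show (P * Qc * E) * (P * Qc * E)ᴴ = 1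
    rw [Matrix.conjTranspose_mul, Matrix.conjTranspose_mul, hQcH]
    calc P * Qc * E * (Eᴴ * (Qcᵀ * Pᴴ))
        = P * (Qc * ((E * Eᴴ) * (Qcᵀ * Pᴴ))) := by simp only [Matrix.mul_assoc]
      _ = 1 := by
          rw [hEEH, Matrix.one_mul, ← Matrix.mul_assoc Qc Qcᵀ Pᴴ, hQcQc,
            Matrix.one_mul, hPP]
  have hreal : R = (R.map Complex.re).map Complex.ofReal := by
    ext i j
    have h := congrFun (congrFun h1 j) i
    simp only [Matrix.transpose_apply, Matrix.conjTranspose_apply] at h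
    have him : (R i j).im = 0 := Complex.conj_eq_iff_im.mp h.symm
    simp [Matrix.map_apply, Complex.ext_iff, him]
  have hRH : Rᴴ = ((R.map Complex.re)ᵀ).map Complex.ofReal := by
    rw [Matrix.transpose_map]
    conv_lhs => rw [hreal]
    ext i j
    simp [conjTranspose_apply, Matrix.map_apply]
  refine ⟨h1, h2, R.map Complex.re, ?_, hreal⟩
  have horth : R.map Complex.re * (R.map Complex.re)ᵀ = 1 := by
    apply mapRinj
    rw [mapRmul, mapRone, ← hreal, ← hRH, h2]
  constructor
  · have := mul_eq_one_comm.mp horth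
    simpa [Matrix.star_eq_conjTranspose] using this
  · simpa [Matrix.star_eq_conjTranspose] using horth
end

section
/- Let 0 < φ_1 ≤ ... ≤ φ_m < π and 0 < φ̂_1 ≤ ... ≤ φ̂_m < π, and suppose ĝ ∈ SO(m) ⊂ U(m) satisfies ĝ(ℝ^m_φ) = ℝ^m_{φ̂}, where ℝ^m_φ = {(t_1 e^{iφ_1}, ..., t_m e^{iφ_m}) : t_i ∈ ℝ} ⊂ ℂ^m. Then φ_j = φ̂_j for all j = 1, ..., m. -/
/-!
Applying `ĝ` to `e^{iφ_k} e_k ∈ ℝ^m_φ` shows that `ĝ_{jk} ≠ 0` forces `e^{iφ_k} ℝ = e^{iφ̂_j} ℝ`,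
hence `φ_k = φ̂_j` because both angles lie in `(0, π)`. So `ĝ` intertwines `diag φ` and `diag φ̂`;
these are similar, hence have the same characteristic polynomial, i.e. the same multiset of
diagonal entries, and two sorted tuples with the same entries coincide.
-/

/-- The Lagrangian subspace `ℝ^m_φ = {(t₁ e^{iφ₁}, ..., t_m e^{iφ_m}) : tᵢ ∈ ℝ} ⊂ ℂ^m`. -/
def Rphi (m : ℕ) (φ : Fin m → ℝ) : Set (Fin m → ℂ) :=
  {x | ∀ i, ∃ t : ℝ, x i = (t : ℂ) * Complex.exp (Complex.I * φ i)}

open Complex Matrix Polynomial Set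

lemma eq_of_ofReal_mul_exp_I_mul_eq {a b s t : ℝ} (ha : a ∈ Ioo 0 Real.pi)
    (hb : b ∈ Ioo 0 Real.pi) (hs : s ≠ 0)
    (h : (s : ℂ) * exp (I * a) = t * exp (I * b)) : a = b := by
  have hsin : s * Real.sin (a - b) = 0 := by
    have hrot := congrArg (fun z => (z * exp (-(I * b))).im) h
    simp only [mul_assoc, ← Complex.exp_add] at hrot
    rw [show I * a + -(I * b) = ((a - b : ℝ) : ℂ) * I by push_cast; ring,
      show I * b + -(I * b) = 0 by ring, exp_zero, mul_one, im_ofReal_mul,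
      exp_ofReal_mul_I_im, ofReal_im] at hrot
    exact hrot
  have hab : a - b = 0 :=
    (Real.sin_eq_zero_iff_of_lt_of_lt (by linarith [ha.1, hb.2]) (by linarith [ha.2, hb.1])).mp
      ((mul_eq_zero.mp hsin).resolve_left hs)
  linarith

lemma single_mem_Rphi {m : ℕ} (φ : Fin m → ℝ) (k : Fin m) :
    Pi.single k (exp (I * φ k)) ∈ Rphi m φ := by
  intro i
  rcases eq_or_ne i k with rfl | hik
  · exact ⟨1, by simp⟩
  · exact ⟨0, by simp [hik]⟩

lemma eq_of_mapsTo_Rphi {m n : ℕ} {φ : Fin m → ℝ} {ψ : Fin n → ℝ}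
    (hφ : ∀ i, φ i ∈ Ioo 0 Real.pi) (hψ : ∀ i, ψ i ∈ Ioo 0 Real.pi)
    {g : Matrix (Fin n) (Fin m) ℝ} (hg : MapsTo (g.map ofReal).mulVec (Rphi m φ) (Rphi n ψ))
    {j : Fin n} {k : Fin m} (hjk : g j k ≠ 0) : φ k = ψ j := by
  obtain ⟨t, ht⟩ := hg (single_mem_Rphi φ k) j
  simp only [mulVec_single, Pi.smul_apply, col_apply, map_apply, MulOpposite.smul_eq_mul_unop,
    MulOpposite.unop_op] at ht
  exact eq_of_ofReal_mul_exp_I_mul_eq (hφ k) (hψ j) hjk ht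

lemma Matrix.mul_diagonal_eq_diagonal_mul {ι κ R : Type*} [Fintype ι] [Fintype κ]
    [DecidableEq ι] [DecidableEq κ] [CommSemiring R] {g : Matrix κ ι R} {d : ι → R} {e : κ → R}
    (h : ∀ j k, g j k ≠ 0 → d k = e j) : g * diagonal d = diagonal e * g := by
  ext j k
  rw [mul_diagonal, diagonal_mul]
  by_cases hjk : g j k = 0
  · simp [hjk]
  · rw [h j k hjk, mul_comm]

lemma Matrix.charpoly_eq_of_mul_eq_mul {n R : Type*} [Fintype n] [DecidableEq n] [CommRing R]
    {g A B : Matrix n n R} (hg : IsUnit g) (h : g * A = B * g) : A.charpoly = B.charpoly := by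
  obtain ⟨u, rfl⟩ := hg
  rw [← charpoly_units_conj u A, h, mul_assoc, ← coe_units_inv, Units.mul_inv, mul_one]

lemma Monotone.eq_of_charpoly_diagonal_eq {R : Type*} [CommRing R] [IsDomain R] [LinearOrder R]
    {n : ℕ} {d e : Fin n → R} (hd : Monotone d) (he : Monotone e)
    (h : (diagonal d).charpoly = (diagonal e).charpoly) : d = e := by
  have hroots (f : Fin n → R) : (diagonal f).charpoly.roots = ↑(List.ofFn f) := by
    rw [charpoly_diagonal, roots_prod _ _ (by simp [Finset.prod_ne_zero_iff, X_sub_C_ne_zero])]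
    simp
  have hperm : (List.ofFn d).Perm (List.ofFn e) :=
    Multiset.coe_eq_coe.mp (by rw [← hroots, ← hroots, h])
  exact List.ofFn_injective (hperm.eq_of_sortedLE (List.sortedLE_ofFn_iff.mpr hd)
    (List.sortedLE_ofFn_iff.mpr he))

theorem stmt7 (m : ℕ) (φ φh : Fin m → ℝ) (g : Matrix (Fin m) (Fin m) ℝ)
    (hφmono : Monotone φ) (hφ : ∀ i, φ i ∈ Set.Ioo 0 Real.pi)
    (hφhmono : Monotone φh) (hφh : ∀ i, φh i ∈ Set.Ioo 0 Real.pi)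
    (hg : g ∈ Matrix.specialOrthogonalGroup (Fin m) ℝ)
    (him : (g.map Complex.ofReal).mulVec '' Rphi m φ = Rphi m φh) :
    φ = φh := by
  have hunit : IsUnit g := by
    rw [isUnit_iff_isUnit_det, (mem_specialOrthogonalGroup_iff.mp hg).2]
    exact isUnit_one
  have hintertwine : g * diagonal φ = diagonal φh * g :=
    mul_diagonal_eq_diagonal_mul fun j k hjk =>
      eq_of_mapsTo_Rphi hφ hφh (mapsTo_iff_image_subset.mpr him.subset) hjk
  exact hφmono.eq_of_charpoly_diagonal_eq hφhmono (charpoly_eq_of_mul_eq_mul hunit hintertwine)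
end

section
/- Let σ ∈ S^2 ⊂ ℝ^3 and extend it to a positively oriented orthonormal basis (σ, σ', σ'') of ℝ^3. Consider ℂ^2 = Z ⊕ W with the hyper-Kähler forms ω_1 = (i/2)(dz∧dz̄ + dw∧dw̄) and ω_2 + iω_3 = dz∧dw, and circle action g·(z,w) = (gz, g^{-1}w). If V ⊂ ℂ^2 is a 2-dimensional real subspace invariant under the circle action on which both ω^{σ'} = σ'_1ω_1 + σ'_2ω_2 + σ'_3ω_3 and ω^{σ''} vanish, and V is isomorphic to Z as a real circle-representation, then V = V(σ) or V = V(-σ), where V(y) = {(αz, β z̄) : z ∈ ℂ} for any (α,β) ∈ S^3 with h(α,β) = y and h(α,β) = (|α|^2-|β|^2, 2Im(αβ), -2Re(αβ)). -/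
open scoped BigOperators

/-- The Kähler form `ω₁ = (i/2)(dz∧dz̄ + dw∧dw̄)` on `ℂ² = Z ⊕ W`, evaluated on vectors. -/
noncomputable def om1 (P Q : ℂ × ℂ) : ℝ :=
  ((starRingEnd ℂ) P.1 * Q.1).im + ((starRingEnd ℂ) P.2 * Q.2).im

/-- The holomorphic symplectic form `ω₂ + iω₃ = dz∧dw`, evaluated on vectors. -/
def omC (P Q : ℂ × ℂ) : ℂ := P.1 * Q.2 - Q.1 * P.2

/-- `ω^y = y₀ ω₁ + y₁ ω₂ + y₂ ω₃` for `y ∈ ℝ³`. -/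
noncomputable def omSigma (y : Fin 3 → ℝ) (P Q : ℂ × ℂ) : ℝ :=
  y 0 * om1 P Q + y 1 * (omC P Q).re + y 2 * (omC P Q).im

/-- `V(y) = {(αz, β z̄) : z ∈ ℂ}` for `(α,β) ∈ S³` in the Hopf fiber over `y ∈ S²`. -/
def Vset (y : Fin 3 → ℝ) : Set (ℂ × ℂ) :=
  {P | ∃ α β z : ℂ, Complex.normSq α + Complex.normSq β = 1 ∧
    Complex.normSq α - Complex.normSq β = y 0 ∧ 2 * (α * β).im = y 1 ∧
    -2 * (α * β).re = y 2 ∧ P = (α * z, β * (starRingEnd ℂ) z)}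

/-!
An injective circle-equivariant `ℝ`-linear map `ℂ → ℂ²` is `z ↦ (αz, βz̄)` with `(α, β) = f 1`,
so `V` is the image of such a map, and after rescaling `(α, β) ∈ S³`. On the basis `(α, β)`,
`(iα, -iβ)` of `V` the form `ω^u` takes the value `⟨u, h(α, β)⟩`, so the unit vector `h(α, β)`
is orthogonal to `σ'` and `σ''`, hence equals `±σ`. The image of `z ↦ (αz, βz̄)` only depends on
`h(α, β)` because it is cut out by `|β|² p = αβ q̄` and `|α|² q = αβ p̄`.
-/

open ComplexConjugate Complex Matrix

theorem Matrix.eq_smul_row_of_dotProduct_eq_zero {n : Type*} [Fintype n] [DecidableEq n]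
    {M : Matrix n n ℝ} (hM : M * Mᵀ = 1) {i : n} {y : n → ℝ}
    (hy : ∀ j ≠ i, M j ⬝ᵥ y = 0) : y = (M i ⬝ᵥ y) • M i := by
  have hMy : M *ᵥ y = Pi.single i (M i ⬝ᵥ y) := by
    ext j
    rcases eq_or_ne j i with rfl | hj
    · simp [mulVec]
    · simp [mulVec, hj, hy j hj]
  calc y = (Mᵀ * M) *ᵥ y := by rw [mul_eq_one_comm.mp hM, one_mulVec]
    _ = (M i ⬝ᵥ y) • M i := by
      rw [← mulVec_mulVec, hMy, mulVec_transpose, single_vecMul]; rfl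

theorem Matrix.of_rows_mul_transpose_eq_one {u v w : Fin 3 → ℝ}
    (hu : u ⬝ᵥ u = 1) (hv : v ⬝ᵥ v = 1) (hw : w ⬝ᵥ w = 1)
    (huv : u ⬝ᵥ v = 0) (huw : u ⬝ᵥ w = 0) (hvw : v ⬝ᵥ w = 0) :
    Matrix.of ![u, v, w] * (Matrix.of ![u, v, w])ᵀ = 1 := by
  have hvu : v ⬝ᵥ u = 0 := dotProduct_comm v u ▸ huv
  have hwu : w ⬝ᵥ u = 0 := dotProduct_comm w u ▸ huw
  have hwv : w ⬝ᵥ v = 0 := dotProduct_comm w v ▸ hvw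
  ext i j
  change ![u, v, w] i ⬝ᵥ ![u, v, w] j = _
  fin_cases i <;> fin_cases j <;> simp [*]

theorem LinearMap.apply_eq_of_circle_equivariant (f : ℂ →ₗ[ℝ] ℂ × ℂ)
    (hf : ∀ (t : ℝ) (z : ℂ), f (exp (I * t) * z) =
      (exp (I * t) * (f z).1, exp (-(I * t)) * (f z).2))
    (z : ℂ) : f z = ((f 1).1 * z, (f 1).2 * conj z) := by
  obtain ⟨r, θ, rfl⟩ : ∃ r θ : ℝ, z = r * exp (I * θ) :=
    ⟨‖z‖, z.arg, by rw [mul_comm I, norm_mul_exp_arg_mul_I]⟩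
  have hconj : conj (r * exp (I * θ)) = r * exp (-(I * θ)) := by
    rw [map_mul, ← exp_conj]
    simp
  calc f (r * exp (I * θ)) = r • f (exp (I * θ) * 1) := by
        rw [← map_smul, real_smul, mul_one]
    _ = _ := by
      rw [hf, hconj]
      ext <;> simp only [Prod.smul_fst, Prod.smul_snd, real_smul] <;> ring

theorem eq_or_eq_neg_of_eq_smul {n : Type*} [Fintype n] {x y : n → ℝ} {c : ℝ}
    (hx : x ⬝ᵥ x = 1) (hy : y ⬝ᵥ y = 1) (h : y = c • x) : y = x ∨ y = -x := by
  subst h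
  have hc : c * c = 1 := by simpa [smul_dotProduct, dotProduct_smul, hx, ← mul_assoc] using hy
  rcases mul_self_eq_one_iff.mp hc with rfl | rfl <;> simp

noncomputable def hopf (α β : ℂ) : Fin 3 → ℝ :=
  ![normSq α - normSq β, 2 * (α * β).im, -2 * (α * β).re]

def hopfPlane (α β : ℂ) : Set (ℂ × ℂ) :=
  Set.range fun z : ℂ => (α * z, β * conj z)

theorem hopf_dotProduct_self (α β : ℂ) :
    hopf α β ⬝ᵥ hopf α β = (normSq α + normSq β) ^ 2 := by
  have h := normSq_mul α β
  rw [normSq_apply (α * β)] at h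
  simp only [hopf, dotProduct, Fin.sum_univ_three, Matrix.cons_val]
  linear_combination 4 * h

theorem hopfPlane_eq_setOf {α β : ℂ} (h : normSq α + normSq β ≠ 0) :
    hopfPlane α β = {P | (normSq β : ℂ) * P.1 = α * β * conj P.2 ∧
      (normSq α : ℂ) * P.2 = α * β * conj P.1} := by
  ext ⟨p, q⟩
  constructor
  · rintro ⟨z, hz⟩
    obtain ⟨rfl, rfl⟩ := Prod.ext_iff.mp hz
    simp only [Set.mem_ofPred_eq, ← mul_conj, map_mul, conj_conj]
    constructor <;> ring
  · rintro ⟨hp, hq⟩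
    set s : ℝ := normSq α + normSq β
    have hs : (s : ℂ) ≠ 0 := by exact_mod_cast h
    refine ⟨(conj α * p + β * conj q) / s, Prod.ext ?_ ?_⟩
    · change α * (_ / (s : ℂ)) = p
      rw [mul_div_assoc', div_eq_iff hs]
      push_cast [s]
      simp only [← mul_conj] at hp ⊢
      linear_combination -hp
    · change β * conj (_ / (s : ℂ)) = q
      rw [map_div₀, conj_ofReal, mul_div_assoc', div_eq_iff hs]
      push_cast [s]
      simp only [map_add, map_mul, conj_conj, ← mul_conj] at hq ⊢
      linear_combination -hq

theorem hopfPlane_ofReal_mul {r : ℝ} (hr : r ≠ 0) (α β : ℂ) :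
    hopfPlane (r * α) (r * β) = hopfPlane α β := by
  have hr' : (r : ℂ) ≠ 0 := by exact_mod_cast hr
  ext P
  constructor
  · rintro ⟨z, rfl⟩
    exact ⟨r * z, by simp only [map_mul, conj_ofReal]; ext <;> ring⟩
  · rintro ⟨z, rfl⟩
    exact ⟨z / r, by simp only [map_div₀, conj_ofReal]; ext <;> field_simp⟩

theorem exists_hopfPlane_eq_of_ne_zero {p : ℂ × ℂ} (hp : p ≠ 0) :
    ∃ α β : ℂ, normSq α + normSq β = 1 ∧ hopfPlane p.1 p.2 = hopfPlane α β := by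
  set n := normSq p.1 + normSq p.2
  have hn : 0 < n := by
    obtain ⟨a, b⟩ := p
    rcases eq_or_ne a 0 with rfl | ha
    · have hb : b ≠ 0 := fun hb => hp (by simp [hb])
      simpa [n] using normSq_pos.mpr hb
    · exact add_pos_of_pos_of_nonneg (normSq_pos.mpr ha) (normSq_nonneg b)
  set r := √n
  have hr : r ≠ 0 := (Real.sqrt_pos.mpr hn).ne'
  have hr' : (r : ℂ) ≠ 0 := by exact_mod_cast hr
  refine ⟨p.1 / r, p.2 / r, ?_, ?_⟩
  · rw [normSq_div, normSq_div, normSq_ofReal, Real.mul_self_sqrt hn.le, ← add_div]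
    exact div_self hn.ne'
  · rw [← hopfPlane_ofReal_mul hr (p.1 / r), mul_div_cancel₀ _ hr', mul_div_cancel₀ _ hr']

theorem hopfPlane_eq_of_hopf_eq {α β α' β' : ℂ} (h : normSq α + normSq β = 1)
    (h' : normSq α' + normSq β' = 1) (hh : hopf α β = hopf α' β') :
    hopfPlane α β = hopfPlane α' β' := by
  have h0 := congrFun hh 0
  have h1 := congrFun hh 1
  have h2 := congrFun hh 2
  simp only [hopf, Matrix.cons_val] at h0 h1 h2
  have hα : normSq α = normSq α' := by linarith
  have hβ : normSq β = normSq β' := by linarith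
  have hαβ : α * β = α' * β' := Complex.ext (by linarith) (by linarith)
  rw [hopfPlane_eq_setOf (by rw [h]; exact one_ne_zero),
    hopfPlane_eq_setOf (by rw [h']; exact one_ne_zero), hα, hβ, hαβ]

theorem Vset_hopf {α β : ℂ} (h : normSq α + normSq β = 1) :
    Vset (hopf α β) = hopfPlane α β := by
  ext P
  constructor
  · rintro ⟨α', β', z, h', h0, h1, h2, rfl⟩
    have hh : hopf α' β' = hopf α β := by
      ext i
      fin_cases i <;> assumption
    rw [hopfPlane_eq_of_hopf_eq h h' hh.symm]
    exact ⟨z, rfl⟩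
  · rintro ⟨z, rfl⟩
    exact ⟨α, β, z, h, rfl, rfl, rfl, rfl⟩

theorem omSigma_hopfPlane (u : Fin 3 → ℝ) (α β : ℂ) :
    omSigma u (α * 1, β * conj 1) (α * I, β * conj I) = u ⬝ᵥ hopf α β := by
  simp only [omSigma, om1, omC, hopf, dotProduct, Fin.sum_univ_three, Matrix.cons_val, mul_one,
    map_one, conj_I, normSq_apply, mul_re, mul_im, conj_re, conj_im, I_re, I_im, neg_re, neg_im,
    sub_re, sub_im]
  ring

theorem stmt12_general (σ σ' σ'' : Fin 3 → ℝ)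
    (hunit : ∀ v ∈ ({σ, σ', σ''} : Set (Fin 3 → ℝ)), ∑ i, v i * v i = 1)
    (horth : ∑ i, σ i * σ' i = 0 ∧ ∑ i, σ i * σ'' i = 0 ∧ ∑ i, σ' i * σ'' i = 0)
    (V : Submodule ℝ (ℂ × ℂ))
    (hσ' : ∀ x ∈ V, ∀ y ∈ V, omSigma σ' x y = 0)
    (hσ'' : ∀ x ∈ V, ∀ y ∈ V, omSigma σ'' x y = 0)
    (hrep : ∃ f : ℂ →ₗ[ℝ] ℂ × ℂ, Function.Injective f ∧ LinearMap.range f = V ∧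
      ∀ (t : ℝ) (z : ℂ), f (Complex.exp (Complex.I * t) * z) =
        (Complex.exp (Complex.I * t) * (f z).1, Complex.exp (-(Complex.I * t)) * (f z).2)) :
    (V : Set (ℂ × ℂ)) = Vset σ ∨ (V : Set (ℂ × ℂ)) = Vset (fun i => -σ i) := by
  obtain ⟨f, hinj, hrange, hequiv⟩ := hrep
  obtain ⟨α, β, hαβ, hplane⟩ :=
    exists_hopfPlane_eq_of_ne_zero ((map_ne_zero_iff f hinj).mpr one_ne_zero)
  have hV : (V : Set (ℂ × ℂ)) = hopfPlane α β := by
    rw [← hplane, ← hrange, LinearMap.coe_range]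
    exact congrArg Set.range (funext (f.apply_eq_of_circle_equivariant hequiv))
  have hperp : ∀ u, (∀ x ∈ V, ∀ y ∈ V, omSigma u x y = 0) → u ⬝ᵥ hopf α β = 0 :=
    fun u hu => omSigma_hopfPlane u α β ▸
      hu _ (hV ▸ ⟨1, rfl⟩ : _ ∈ (V : Set (ℂ × ℂ))) _ (hV ▸ ⟨I, rfl⟩ : _ ∈ (V : Set (ℂ × ℂ)))
  have hσ := hunit σ (by simp)
  have hM := Matrix.of_rows_mul_transpose_eq_one hσ (hunit σ' (by simp)) (hunit σ'' (by simp))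
    horth.1 horth.2.1 horth.2.2
  have hsmul := Matrix.eq_smul_row_of_dotProduct_eq_zero hM (i := 0) (y := hopf α β) <| by
    intro j hj
    fin_cases j
    exacts [absurd rfl hj, hperp σ' hσ', hperp σ'' hσ'']
  rcases eq_or_eq_neg_of_eq_smul hσ (by rw [hopf_dotProduct_self, hαβ, one_pow]) hsmul
    with h | h
  · exact .inl (by rw [hV, ← Vset_hopf hαβ, h])
  · exact .inr (by rw [hV, ← Vset_hopf hαβ, h]; rfl)

theorem stmt12 (σ σ' σ'' : Fin 3 → ℝ)
    (hunit : ∀ v ∈ ({σ, σ', σ''} : Set (Fin 3 → ℝ)), ∑ i, v i * v i = 1)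
    (horth : ∑ i, σ i * σ' i = 0 ∧ ∑ i, σ i * σ'' i = 0 ∧ ∑ i, σ' i * σ'' i = 0)
    (hor : Matrix.det (Matrix.of ![σ, σ', σ'']) = 1)
    (V : Submodule ℝ (ℂ × ℂ))
    (hdim : Module.finrank ℝ V = 2)
    (hinv : ∀ (t : ℝ), ∀ x ∈ V,
      (Complex.exp (Complex.I * t) * x.1, Complex.exp (-(Complex.I * t)) * x.2) ∈ V)
    (hσ' : ∀ x ∈ V, ∀ y ∈ V, omSigma σ' x y = 0)
    (hσ'' : ∀ x ∈ V, ∀ y ∈ V, omSigma σ'' x y = 0)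
    (hrep : ∃ f : ℂ →ₗ[ℝ] ℂ × ℂ, Function.Injective f ∧ LinearMap.range f = V ∧
      ∀ (t : ℝ) (z : ℂ), f (Complex.exp (Complex.I * t) * z) =
        (Complex.exp (Complex.I * t) * (f z).1, Complex.exp (-(Complex.I * t)) * (f z).2)) :
    (V : Set (ℂ × ℂ)) = Vset σ ∨ (V : Set (ℂ × ℂ)) = Vset (fun i => -σ i) :=
  stmt12_general σ σ' σ'' hunit horth V hσ' hσ'' hrep
end

section
/- Let n ≥ 2, and let ρ_k (k ∈ ℤ/2nℤ) be as follows: ρ_{2m-1} = e^{2πi(m-1)/n} + a_m(e^{2πim/n} - e^{2πi(m-1)/n}), ρ_{2m} = e^{2πi(m+1)/n} + a_m(e^{2πim/n} - e^{2πi(m+1)/n}), with 1 < a_m < 1 + (1 - cos(2π/n))/(1 + cos(2π/n)) for all m. Then Re(ρ_k e^{-2πim/n}) < -(a_m - 1)cos(2π/n) + a_m holds for every k with d_{2n}(k, 2m) > 1, where d_{2n}(k, l) = min{|k - l + 2nj| : j ∈ ℤ}. -/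
open Complex

lemma aux1 (p c : ℝ) (hp1 : -1 ≤ p) (hpc : p ≤ c) (hc : c ≤ 1) :
    (1-c)^3*(1+c)*(1-p^2) ≤ ((1+c) - p*(c^2-c+2))^2 := by
  have h1 : 0 ≤ 4*c^2*(1-c)^2 := by positivity
  have h2 : 0 ≤ 4*((c-p)*((1-c)*(2*c^2-c+1))) := by
    have : (0:ℝ) < 2*c^2-c+1 := by nlinarith [sq_nonneg (2*c-1)]
    have := mul_nonneg (mul_nonneg (sub_nonneg.2 hpc) (sub_nonneg.2 hc)) this.le
    nlinarith [this]
  have h3 : 0 ≤ ((c^2-c+2)^2+(1-c)^3*(1+c))*(c-p)^2 := by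
    have : (0:ℝ) ≤ (c^2-c+2)^2+(1-c)^3*(1+c) := by nlinarith [sq_nonneg (c-p), sq_nonneg c, sq_nonneg (1-c), sq_nonneg (1+c)]
    exact mul_nonneg this (sq_nonneg _)
  linarith [h1, h2, h3]

lemma key (p s c t : ℝ) (hp : p^2+s^2=1) (hc : c^2+t^2=1) (hpc : p ≤ c) :
    (1-c)*(p - (p*c + s*t)) ≤ (1+c)*(1-p) := by
  have hc1 : c ≤ 1 := by nlinarith [sq_nonneg t, sq_nonneg (c-1), sq_nonneg (c+1)]
  have hp1 : -1 ≤ p := by nlinarith [sq_nonneg s, sq_nonneg (p-1), sq_nonneg (p+1)]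
  have hM : 0 ≤ (1+c) - p*(c^2-c+2) := by
    nlinarith [mul_nonneg (sub_nonneg.2 hpc) (by nlinarith [sq_nonneg (2*c-1)] : (0:ℝ) ≤ c^2-c+2), mul_nonneg (sub_nonneg.2 hc1) (sq_nonneg c)]
  have haux := aux1 p c hp1 hpc hc1
  have hts : ((1-c)*s*t)^2 = (1-c)^3*(1+c)*(1-p^2) := by
    have h1 : s^2 = 1-p^2 := by linarith
    have h2 : t^2 = 1-c^2 := by linarith
    calc ((1-c)*s*t)^2 = (1-c)^2*s^2*t^2 := by ring
    _ = (1-c)^2*(1-p^2)*(1-c^2) := by rw [h1, h2]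
    _ = (1-c)^3*(1+c)*(1-p^2) := by ring
  nlinarith [hM, haux, hts, sq_nonneg ((1+c) - p*(c^2-c+2) + (1-c)*s*t)]


lemma real_main (c t p s a' am : ℝ) (hpc : p ≤ c) (hc1 : c < 1) (hc2 : -1 < c)
    (hp : p^2+s^2 = 1) (hc : c^2+t^2 = 1)
    (ha1 : 1 ≤ a') (ha2 : a' < 1 + (1-c)/(1+c)) (ham : 1 < am) :
    (1-a')*(p*c+s*t) + a'*p < -(am-1)*c + am := by
  have hk := key p s c t hp hc hpc
  have h1c : (0:ℝ) < 1 + c := by linarith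
  have hrhs : (1:ℝ) < -(am-1)*c + am := by nlinarith
  have ha2' : (a'-1)*(1+c) < 1 - c := by
    have h := sub_lt_sub_right ha2 1
    rw [add_sub_cancel_left] at h
    calc (a'-1)*(1+c) < ((1-c)/(1+c))*(1+c) := by
          apply mul_lt_mul_of_pos_right h h1c
      _ = 1 - c := by field_simp
  rcases le_or_gt (p - (p*c+s*t)) 0 with h|h
  · nlinarith [mul_nonneg (sub_nonneg.2 ha1) (neg_nonneg.2 h)]
  · have h2 : (1+c)*((a'-1)*(p - (p*c+s*t))) < (1+c)*(1-p) := by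
      calc (1+c)*((a'-1)*(p - (p*c+s*t))) = ((a'-1)*(1+c))*(p - (p*c+s*t)) := by ring
        _ < (1-c)*(p - (p*c+s*t)) := mul_lt_mul_of_pos_right ha2' h
        _ ≤ (1+c)*(1-p) := hk
    have h3 : (a'-1)*(p - (p*c+s*t)) < 1-p := (mul_lt_mul_iff_right₀ h1c).1 h2
    nlinarith [h3, hrhs]

lemma cos_le_aux (n : ℕ) (hn : 2 ≤ n) (d : ℤ) (hd : ¬ ((n:ℤ) ∣ d)) :
    Real.cos (2*Real.pi*d/n) ≤ Real.cos (2*Real.pi/n) := by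
  have hπ := Real.pi_pos
  have hn0 : (0:ℝ) < n := by positivity
  have hnz : (n:ℤ) ≠ 0 := by positivity
  set r := d % (n:ℤ) with hrdef
  have hr0 : 0 < r := by
    rcases (Int.emod_nonneg d hnz).lt_or_eq with h|h
    · exact h
    · exact absurd (Int.dvd_of_emod_eq_zero h.symm) hd
  have hrn : r < n := Int.emod_lt_of_pos d (by positivity)
  have hdq : d = (n:ℤ) * (d / n) + r := (Int.mul_ediv_add_emod d n).symm
  have hstep : Real.cos (2*Real.pi*d/n) = Real.cos (2*Real.pi*r/n) := by
    have hde : (2*Real.pi*d/n : ℝ) = 2*Real.pi*r/n + ((d / (n:ℤ) : ℤ) : ℝ) * (2*Real.pi) := by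
      have hcast : (d:ℝ) = (n:ℝ) * ((d / (n:ℤ) : ℤ) : ℝ) + (r:ℝ) := by exact_mod_cast hdq
      field_simp
      nlinarith [hcast, Real.pi_pos]
    rw [hde, Real.cos_add_int_mul_two_pi]
  rw [hstep]
  have hr1 : (1:ℝ) ≤ (r:ℝ) := by exact_mod_cast hr0
  have hrn' : (r:ℝ) ≤ (n:ℝ) - 1 := by
    have : (r:ℝ) + 1 ≤ (n:ℝ) := by exact_mod_cast hrn
    linarith
  have hy1 : 2*Real.pi/n ≤ 2*Real.pi*r/n := by
    apply (div_le_div_iff_of_pos_right hn0).2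
    nlinarith
  have hy2 : 2*Real.pi*r/n ≤ 2*Real.pi - 2*Real.pi/n := by
    have he : 2*Real.pi - 2*Real.pi/n = 2*Real.pi*((n:ℝ)-1)/n := by
      field_simp
    rw [he]
    apply (div_le_div_iff_of_pos_right hn0).2
    nlinarith
  rcases le_or_gt (2*Real.pi*r/n) Real.pi with h|h
  · exact Real.cos_le_cos_of_nonneg_of_le_pi (by positivity) h hy1
  · rw [← Real.cos_two_pi_sub]
    exact Real.cos_le_cos_of_nonneg_of_le_pi (by positivity) (by linarith) (by linarith)

theorem stmt15 (n : ℕ) (hn : 2 ≤ n) (a : ℤ → ℝ) (ρ : ℤ → ℂ)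
    (haper : ∀ m : ℤ, a (m + n) = a m)
    (hab : ∀ m : ℤ, 1 < a m ∧
      a m < 1 + (1 - Real.cos (2 * Real.pi / n)) / (1 + Real.cos (2 * Real.pi / n)))
    (hodd : ∀ m : ℤ, ρ (2 * m - 1) =
      Complex.exp (2 * Real.pi * Complex.I * ((m : ℂ) - 1) / n) +
        (a m : ℂ) * (Complex.exp (2 * Real.pi * Complex.I * m / n) -
          Complex.exp (2 * Real.pi * Complex.I * ((m : ℂ) - 1) / n)))
    (heven : ∀ m : ℤ, ρ (2 * m) =
      Complex.exp (2 * Real.pi * Complex.I * ((m : ℂ) + 1) / n) +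
        (a m : ℂ) * (Complex.exp (2 * Real.pi * Complex.I * m / n) -
          Complex.exp (2 * Real.pi * Complex.I * ((m : ℂ) + 1) / n)))
    (k m : ℤ) (hfar : ∀ j : ℤ, 1 < |k - 2 * m + 2 * n * j|) :
    (ρ k * Complex.exp (-(2 * Real.pi * Complex.I * m / n))).re
      < -(a m - 1) * Real.cos (2 * Real.pi / n) + a m := by
  have hπ := Real.pi_pos
  -- exclude n = 2
  have hn3 : 3 ≤ n := by
    rcases Nat.lt_or_ge n 3 with h|h
    · exfalso
      have hn2 : n = 2 := by omega
      subst hn2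
      have h0 := hab 0
      have e : 2 * Real.pi / ((2:ℕ):ℝ) = Real.pi := by norm_num
      rw [e, Real.cos_pi] at h0
      norm_num at h0
      linarith [h0.1, h0.2]
    · exact h
  have hn0 : (0:ℝ) < n := by positivity
  have hnR3 : (3:ℝ) ≤ (n:ℝ) := by exact_mod_cast hn3
  have hθpos : 0 < 2 * Real.pi / n := by positivity
  have hθle : 2 * Real.pi / n ≤ 2 * Real.pi / 3 := by
    apply div_le_div_of_nonneg_left (by positivity) (by norm_num) hnR3
  have hθltπ : 2 * Real.pi / n < Real.pi := by
    have : 2 * Real.pi / 3 < Real.pi := by linarith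
    linarith
  set c : ℝ := Real.cos (2 * Real.pi / n) with hcdef
  have hc1 : c < 1 := by
    have hne : c ≠ 1 := by
      intro h
      have := (Real.cos_eq_one_iff_of_lt_of_lt (by linarith) (by linarith)).1 h
      linarith
    exact lt_of_le_of_ne (Real.cos_le_one _) hne
  have hc2 : -1 < c := by
    have h23 : Real.cos (2*Real.pi/3) = -(1/2) := by
      rw [show 2*Real.pi/3 = Real.pi - Real.pi/3 by ring, Real.cos_pi_sub,
        Real.cos_pi_div_three]
    have := Real.cos_le_cos_of_nonneg_of_le_pi (le_of_lt hθpos) (by linarith) hθle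
    rw [h23] at this
    linarith
  set t : ℝ := Real.sin (2 * Real.pi / n) with htdef
  have hct : c^2 + t^2 = 1 := by
    rw [hcdef, htdef]; exact Real.cos_sq_add_sin_sq _
  have ham : 1 < a m := (hab m).1
  -- main case split
  rcases Int.even_or_odd k with ⟨m', hm'⟩ | ⟨m', hm'⟩
  · -- even : k = 2 m'
    have hk2 : k = 2 * m' := by omega
    have hdvd : ¬ ((n:ℤ) ∣ (m' - m)) := by
      rintro ⟨e, he⟩
      have h := hfar (-e)
      have h0 : k - 2*m + 2*(n:ℤ)*(-e) = 0 := by linear_combination hk2 + 2*he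
      rw [h0] at h
      simp at h
    have e1 : Complex.exp (2 * (Real.pi:ℂ) * Complex.I * ((m':ℂ) + 1) / n) *
        Complex.exp (-(2 * Real.pi * Complex.I * m / n)) =
        Complex.exp (((2*Real.pi*((m':ℝ) - m + 1)/n : ℝ) : ℂ) * Complex.I) := by
      rw [← Complex.exp_add]
      congr 1
      push_cast
      ring
    have e2 : Complex.exp (2 * (Real.pi:ℂ) * Complex.I * (m':ℂ) / n) *
        Complex.exp (-(2 * Real.pi * Complex.I * m / n)) =
        Complex.exp (((2*Real.pi*((m':ℝ) - m)/n : ℝ) : ℂ) * Complex.I) := by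
      rw [← Complex.exp_add]
      congr 1
      push_cast
      ring
    have ebig : ρ k * Complex.exp (-(2 * Real.pi * Complex.I * m / n)) =
        Complex.exp (((2*Real.pi*((m':ℝ) - m + 1)/n : ℝ) : ℂ) * Complex.I) +
          (a m' : ℂ) * (Complex.exp (((2*Real.pi*((m':ℝ) - m)/n : ℝ) : ℂ) * Complex.I) -
            Complex.exp (((2*Real.pi*((m':ℝ) - m + 1)/n : ℝ) : ℂ) * Complex.I)) := by
      rw [hk2, heven m', ← e1, ← e2]
      ring
    rw [ebig]
    simp only [Complex.add_re, Complex.sub_re, Complex.mul_re, Complex.ofReal_re,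
      Complex.ofReal_im, Complex.exp_ofReal_mul_I_re, Complex.exp_ofReal_mul_I_im,
      zero_mul, sub_zero]
    set u : ℝ := 2*Real.pi*((m':ℝ) - m)/n with hudef
    have hu1 : 2*Real.pi*((m':ℝ) - m + 1)/n = u + 2*Real.pi/n := by
      rw [hudef]; ring
    rw [hu1, Real.cos_add]
    have hpc : Real.cos u ≤ c := by
      have := cos_le_aux n hn (m' - m) hdvd
      have hcast : 2*Real.pi*(((m' - m : ℤ)):ℝ)/n = u := by push_cast; ring
      rw [hcast] at this
      exact this
    have hps : (Real.cos u)^2 + (-Real.sin u)^2 = 1 := by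
      have := Real.cos_sq_add_sin_sq u
      nlinarith [this]
    have H := real_main c t (Real.cos u) (-Real.sin u) (a m') (a m) hpc hc1 hc2
      hps hct (le_of_lt (hab m').1) (hab m').2 ham
    nlinarith [H]
  · -- odd : k = 2 m' + 1 = 2(m'+1) - 1
    have hk2 : k = 2 * (m' + 1) - 1 := by omega
    have hdvd : ¬ ((n:ℤ) ∣ (m' + 1 - m)) := by
      rintro ⟨e, he⟩
      have h := hfar (-e)
      have h0 : k - 2*m + 2*(n:ℤ)*(-e) = -1 := by linear_combination hk2 + 2*he
      rw [h0] at h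
      simp at h
    have e1 : Complex.exp (2 * (Real.pi:ℂ) * Complex.I * (((m'+1 : ℤ):ℂ) - 1) / n) *
        Complex.exp (-(2 * Real.pi * Complex.I * m / n)) =
        Complex.exp (((2*Real.pi*((m':ℝ) + 1 - m - 1)/n : ℝ) : ℂ) * Complex.I) := by
      rw [← Complex.exp_add]
      congr 1
      push_cast
      ring
    have e2 : Complex.exp (2 * (Real.pi:ℂ) * Complex.I * ((m'+1 : ℤ):ℂ) / n) *
        Complex.exp (-(2 * Real.pi * Complex.I * m / n)) =
        Complex.exp (((2*Real.pi*((m':ℝ) + 1 - m)/n : ℝ) : ℂ) * Complex.I) := by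
      rw [← Complex.exp_add]
      congr 1
      push_cast
      ring
    have ebig : ρ k * Complex.exp (-(2 * Real.pi * Complex.I * m / n)) =
        Complex.exp (((2*Real.pi*((m':ℝ) + 1 - m - 1)/n : ℝ) : ℂ) * Complex.I) +
          (a (m'+1) : ℂ) * (Complex.exp (((2*Real.pi*((m':ℝ) + 1 - m)/n : ℝ) : ℂ) * Complex.I) -
            Complex.exp (((2*Real.pi*((m':ℝ) + 1 - m - 1)/n : ℝ) : ℂ) * Complex.I)) := by
      rw [hk2, hodd (m'+1), ← e1, ← e2]
      ring
    rw [ebig]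
    simp only [Complex.add_re, Complex.sub_re, Complex.mul_re, Complex.ofReal_re,
      Complex.ofReal_im, Complex.exp_ofReal_mul_I_re, Complex.exp_ofReal_mul_I_im,
      zero_mul, sub_zero]
    set u : ℝ := 2*Real.pi*((m':ℝ) + 1 - m)/n with hudef
    have hu1 : 2*Real.pi*((m':ℝ) + 1 - m - 1)/n = u - 2*Real.pi/n := by
      rw [hudef]; ring
    rw [hu1, Real.cos_sub]
    have hpc : Real.cos u ≤ c := by
      have := cos_le_aux n hn (m' + 1 - m) hdvd
      have hcast : 2*Real.pi*(((m' + 1 - m : ℤ)):ℝ)/n = u := by push_cast; ring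
      rw [hcast] at this
      exact this
    have hps : (Real.cos u)^2 + (Real.sin u)^2 = 1 := Real.cos_sq_add_sin_sq u
    have H := real_main c t (Real.cos u) (Real.sin u) (a (m'+1)) (a m) hpc hc1 hc2
      hps hct (le_of_lt (hab (m'+1)).1) (hab (m'+1)).2 ham
    nlinarith [H]
end
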